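/- arXiv:2411.05853 — 3 statements merged into one kernel-verified Lean document; each statement's English description precedes it below -/
import Mathlib

section
/- Let (X,Y) be a pair of random variables with values in ℝ^d × ℝ^k, let f : ℝ^d → ℝ^k be measurable, and suppose ℓ, A, B : ℝ^k × ℝ^k → ℝ≥0 satisfy ℓ(u,v) + ℓ(u',v') + A(v,v') ≥ B(u,u') for all u,v,u',v'. Then R(f) + R_ε(f) ≥ E[sup_{‖Δ‖≤ε} B(f(X), f(X+Δ))], where R(f) = E[ℓ(f(X),Y)] and R_ε(f) = E[sup_{‖Δ‖≤ε} ℓ(f(X+Δ),Y)], provided A(u,u) = 0 for all u and all expectations are finite. -/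
open MeasureTheory

/- Taking `v = v' = y` in the comparison inequality kills the `A` term, so
`B (f x) (f (x + Δ)) ≤ ℓ (f x) y + ℓ (f (x + Δ)) y` for every admissible `Δ`. Bounding the
second term by its supremum and then taking the supremum over `Δ` on the left gives a pointwise
inequality between the integrands, which integrates to the claim. -/

theorem le_add_of_comparison {α β : Type*} {ℓ : α → β → ℝ} {A : β → β → ℝ} {B : α → α → ℝ}
    (hA0 : ∀ v, A v v = 0) (hcomp : ∀ u v u' v', ℓ u v + ℓ u' v' + A v v' ≥ B u u')
    (u u' : α) (v : β) : B u u' ≤ ℓ u v + ℓ u' v := by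
  simpa [hA0] using hcomp u v u' v

theorem ciSup_le_add_ciSup {ι : Type*} [Nonempty ι] {g h : ι → ℝ} {c : ℝ}
    (hh : BddAbove (Set.range h)) (hgh : ∀ i, g i ≤ c + h i) : ⨆ i, g i ≤ c + ⨆ i, h i :=
  ciSup_le fun i => (hgh i).trans (add_le_add_right (le_ciSup hh i) c)

theorem risk_tradeoff_smoothness_general {Ω : Type*} [MeasureSpace Ω]
    {E : Type*} [NormedAddCommGroup E] {k : ℕ}
    (X : Ω → E) (Y : Ω → (Fin k → ℝ))
    (f : E → (Fin k → ℝ))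
    (ℓ A B : (Fin k → ℝ) → (Fin k → ℝ) → ℝ)
    (hA0 : ∀ u, A u u = 0)
    (hcomp : ∀ u v u' v', ℓ u v + ℓ u' v' + A v v' ≥ B u u')
    (ε : ℝ) (hε : 0 ≤ ε)
    (hR : Integrable (fun ω => ℓ (f (X ω)) (Y ω)))
    (hRε : Integrable (fun ω => ⨆ Δ : {Δ : E // ‖Δ‖ ≤ ε}, ℓ (f (X ω + ↑Δ)) (Y ω)))
    (hBint : Integrable (fun ω => ⨆ Δ : {Δ : E // ‖Δ‖ ≤ ε}, B (f (X ω)) (f (X ω + ↑Δ))))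
    (hbdd : ∀ ω, BddAbove (Set.range fun Δ : {Δ : E // ‖Δ‖ ≤ ε} => ℓ (f (X ω + ↑Δ)) (Y ω))) :
    (∫ ω, ℓ (f (X ω)) (Y ω)) + (∫ ω, ⨆ Δ : {Δ : E // ‖Δ‖ ≤ ε}, ℓ (f (X ω + ↑Δ)) (Y ω))
      ≥ ∫ ω, ⨆ Δ : {Δ : E // ‖Δ‖ ≤ ε}, B (f (X ω)) (f (X ω + ↑Δ)) := by
  have : Nonempty {Δ : E // ‖Δ‖ ≤ ε} := ⟨⟨0, by simpa using hε⟩⟩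
  rw [← integral_add hR hRε]
  refine integral_mono hBint (hR.add hRε) fun ω => ciSup_le_add_ciSup (hbdd ω) fun Δ => ?_
  exact le_add_of_comparison hA0 hcomp _ _ _

/-- First lower bound of the main theorem: if `ℓ u v + ℓ u' v' + A v v' ≥ B u u'` and
`A(u,u) = 0`, then `R(f) + R_ε(f) ≥ E[sup_{‖Δ‖ ≤ ε} B (f X) (f (X + Δ))]`. -/
theorem risk_tradeoff_smoothness {Ω : Type*} [MeasureSpace Ω]
    [IsProbabilityMeasure (volume : Measure Ω)]
    {E : Type*} [NormedAddCommGroup E] [MeasurableSpace E] {k : ℕ}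
    (X : Ω → E) (Y : Ω → (Fin k → ℝ)) (hX : Measurable X) (hY : Measurable Y)
    (f : E → (Fin k → ℝ)) (hf : Measurable f)
    (ℓ A B : (Fin k → ℝ) → (Fin k → ℝ) → ℝ)
    (hℓ : ∀ u v, 0 ≤ ℓ u v) (hA : ∀ u v, 0 ≤ A u v) (hB : ∀ u v, 0 ≤ B u v)
    (hA0 : ∀ u, A u u = 0)
    (hcomp : ∀ u v u' v', ℓ u v + ℓ u' v' + A v v' ≥ B u u')
    (ε : ℝ) (hε : 0 ≤ ε)
    (hR : Integrable (fun ω => ℓ (f (X ω)) (Y ω)))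
    (hRε : Integrable (fun ω => ⨆ Δ : {Δ : E // ‖Δ‖ ≤ ε}, ℓ (f (X ω + ↑Δ)) (Y ω)))
    (hBint : Integrable (fun ω => ⨆ Δ : {Δ : E // ‖Δ‖ ≤ ε}, B (f (X ω)) (f (X ω + ↑Δ))))
    (hbdd : ∀ ω, BddAbove (Set.range fun Δ : {Δ : E // ‖Δ‖ ≤ ε} => ℓ (f (X ω + ↑Δ)) (Y ω))) :
    (∫ ω, ℓ (f (X ω)) (Y ω)) + (∫ ω, ⨆ Δ : {Δ : E // ‖Δ‖ ≤ ε}, ℓ (f (X ω + ↑Δ)) (Y ω))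
      ≥ ∫ ω, ⨆ Δ : {Δ : E // ‖Δ‖ ≤ ε}, B (f (X ω)) (f (X ω + ↑Δ)) :=
  risk_tradeoff_smoothness_general X Y f ℓ A B hA0 hcomp ε hε hR hRε hBint hbdd
end

section
/- Let p ≥ 1 be an integer, let W be a nonnegative real random variable with E[W^{2p-j-k}] ≥ s^{2p-j-k} for all 1 ≤ j,k ≤ p-1 where s ≥ 0, and let t ≥ 0. Then E[((W + t)^p - W^p)²] ≥ ((s + t)^p - s^p)² / 2. -/
/-!
Write `(w + t)^p - w^p = t^p + f(w)` with `f(w) = ∑_{0<k<p} C(p,k) t^(p-k) w^k`, a polynomial with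
nonnegative coefficients and no constant term. Since `f(W) ≥ 0`, dropping the cross term gives
`E[(t^p + f(W))²] ≥ t^(2p) + E[f(W)²]`. Expanding `f(W)²` into monomials `W^(j+k)` with `0 < j, k < p`
and bounding each moment below by `s^(j+k)` gives `E[f(W)²] ≥ f(s)²`. Finally
`t^(2p) + f(s)² ≥ (t^p + f(s))²/2 = ((s+t)^p - s^p)²/2`.
-/

open MeasureTheory Finset

section MomentsOfPolynomials

variable {Ω : Type*} [MeasurableSpace Ω] {μ : Measure Ω} (S : Finset ℕ) (c : ℕ → ℝ)

lemma sq_sum_mul_pow (x : ℝ) :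
    (∑ k ∈ S, c k * x ^ k) ^ 2 = ∑ j ∈ S, ∑ k ∈ S, c j * c k * x ^ (j + k) := by
  rw [sq, sum_mul_sum]
  exact sum_congr rfl fun j _ => sum_congr rfl fun k _ => by ring

variable {S c} {W : Ω → ℝ}

lemma integrable_sq_sum_mul_pow (hW : ∀ j ∈ S, ∀ k ∈ S, Integrable (fun ω => W ω ^ (j + k)) μ) :
    Integrable (fun ω => (∑ k ∈ S, c k * W ω ^ k) ^ 2) μ := by
  simp_rw [sq_sum_mul_pow]
  exact integrable_finsetSum _ fun j hj =>
    integrable_finsetSum _ fun k hk => (hW j hj k hk).const_mul _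

lemma integral_sq_sum_mul_pow (hW : ∀ j ∈ S, ∀ k ∈ S, Integrable (fun ω => W ω ^ (j + k)) μ) :
    ∫ ω, (∑ k ∈ S, c k * W ω ^ k) ^ 2 ∂μ =
      ∑ j ∈ S, ∑ k ∈ S, c j * c k * ∫ ω, W ω ^ (j + k) ∂μ := by
  simp_rw [sq_sum_mul_pow]
  rw [integral_finsetSum _ fun j hj =>
    integrable_finsetSum _ fun k hk => (hW j hj k hk).const_mul _]
  refine sum_congr rfl fun j hj => ?_
  rw [integral_finsetSum _ fun k hk => (hW j hj k hk).const_mul _]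
  exact sum_congr rfl fun k _ => integral_const_mul _ _

lemma sq_sum_mul_pow_le_integral {s : ℝ} (hc : ∀ k ∈ S, 0 ≤ c k)
    (hW : ∀ j ∈ S, ∀ k ∈ S, Integrable (fun ω => W ω ^ (j + k)) μ)
    (hmom : ∀ j ∈ S, ∀ k ∈ S, s ^ (j + k) ≤ ∫ ω, W ω ^ (j + k) ∂μ) :
    (∑ k ∈ S, c k * s ^ k) ^ 2 ≤ ∫ ω, (∑ k ∈ S, c k * W ω ^ k) ^ 2 ∂μ := by
  rw [sq_sum_mul_pow, integral_sq_sum_mul_pow hW]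
  gcongr with j hj k hk
  · exact mul_nonneg (hc j hj) (hc k hk)
  · exact hmom j hj k hk

lemma sq_add_integral_sq_le_integral_add_sq [IsProbabilityMeasure μ] {a : ℝ} {F : Ω → ℝ}
    (ha : 0 ≤ a) (hF : ∀ ω, 0 ≤ F ω) (hF_sq : Integrable (fun ω => F ω ^ 2) μ)
    (haF_sq : Integrable (fun ω => (a + F ω) ^ 2) μ) :
    a ^ 2 + ∫ ω, F ω ^ 2 ∂μ ≤ ∫ ω, (a + F ω) ^ 2 ∂μ := by
  calc a ^ 2 + ∫ ω, F ω ^ 2 ∂μ = ∫ ω, (a ^ 2 + F ω ^ 2) ∂μ := by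
        rw [integral_add (integrable_const _) hF_sq, integral_const, probReal_univ, one_smul]
    _ ≤ ∫ ω, (a + F ω) ^ 2 ∂μ :=
        integral_mono ((integrable_const _).add hF_sq) haF_sq fun ω => by nlinarith [hF ω]

end MomentsOfPolynomials

lemma add_pow_sub_pow_eq_sum (p : ℕ) (x t : ℝ) :
    (x + t) ^ p - x ^ p = ∑ k ∈ range p, p.choose k * t ^ (p - k) * x ^ k := by
  rw [add_pow, sum_range_succ, Nat.sub_self, pow_zero, Nat.choose_self, Nat.cast_one, mul_one,
    mul_one, add_sub_cancel_right]
  exact sum_congr rfl fun k _ => by ring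

lemma add_pow_sub_pow_eq_pow_add_sum {p : ℕ} (hp : 1 ≤ p) (x t : ℝ) :
    (x + t) ^ p - x ^ p = t ^ p + ∑ k ∈ Ico 1 p, p.choose k * t ^ (p - k) * x ^ k := by
  rw [add_pow_sub_pow_eq_sum, range_eq_Ico, sum_eq_sum_Ico_succ_bot hp]
  simp

theorem moment_lower_bound_general {Ω : Type*} [MeasureSpace Ω]
    [IsProbabilityMeasure (volume : Measure Ω)]
    (p : ℕ) (hp : 1 ≤ p) (W : Ω → ℝ) (hW : ∀ ω, 0 ≤ W ω)
    (s t : ℝ) (ht : 0 ≤ t)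
    (hmom : ∀ j k : ℕ, 1 ≤ j → j ≤ p - 1 → 1 ≤ k → k ≤ p - 1 →
      s ^ (2 * p - j - k) ≤ ∫ ω, W ω ^ (2 * p - j - k))
    (hintpow : ∀ m : ℕ, m ≤ 2 * p → Integrable (fun ω => W ω ^ m)) :
    ((s + t) ^ p - s ^ p) ^ 2 / 2 ≤ ∫ ω, ((W ω + t) ^ p - W ω ^ p) ^ 2 := by
  set f : ℝ → ℝ := fun x => ∑ k ∈ Ico 1 p, p.choose k * t ^ (p - k) * x ^ k
  have hf_nonneg (ω : Ω) : 0 ≤ f (W ω) := sum_nonneg fun k _ => by have := hW ω; positivity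
  have hW_int {S : Finset ℕ} (hS : S ⊆ range p) :
      ∀ j ∈ S, ∀ k ∈ S, Integrable (fun ω => W ω ^ (j + k)) := fun j hj k hk =>
    hintpow _ (by have := mem_range.1 (hS hj); have := mem_range.1 (hS hk); omega)
  have hIco : Ico 1 p ⊆ range p := fun k hk => mem_range.2 (mem_Ico.1 hk).2
  have hf_sq_int : Integrable fun ω => f (W ω) ^ 2 := integrable_sq_sum_mul_pow (hW_int hIco)
  have hf_sq : f s ^ 2 ≤ ∫ ω, f (W ω) ^ 2 :=
    sq_sum_mul_pow_le_integral (fun k _ => by positivity) (hW_int hIco) fun j hj k hk => by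
      obtain ⟨hj1, hjp⟩ := mem_Ico.1 hj
      obtain ⟨hk1, hkp⟩ := mem_Ico.1 hk
      simpa [show 2 * p - (p - j) - (p - k) = j + k by omega] using
        hmom (p - j) (p - k) (by omega) (by omega) (by omega) (by omega)
  have h_int : Integrable fun ω => ((W ω + t) ^ p - W ω ^ p) ^ 2 := by
    simp_rw [add_pow_sub_pow_eq_sum]
    exact integrable_sq_sum_mul_pow (hW_int subset_rfl)
  simp_rw [add_pow_sub_pow_eq_pow_add_sum hp] at h_int ⊢
  calc (t ^ p + f s) ^ 2 / 2
      ≤ (t ^ p) ^ 2 + f s ^ 2 := by linarith [add_sq_le (a := t ^ p) (b := f s)]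
    _ ≤ (t ^ p) ^ 2 + ∫ ω, f (W ω) ^ 2 := by gcongr
    _ ≤ ∫ ω, (t ^ p + f (W ω)) ^ 2 :=
      sq_add_integral_sq_le_integral_add_sq (by positivity) hf_nonneg hf_sq_int h_int

theorem moment_lower_bound {Ω : Type*} [MeasureSpace Ω]
    [IsProbabilityMeasure (volume : Measure Ω)]
    (p : ℕ) (hp : 1 ≤ p) (W : Ω → ℝ) (hW : ∀ ω, 0 ≤ W ω)
    (s t : ℝ) (hs : 0 ≤ s) (ht : 0 ≤ t)
    (hmom : ∀ j k : ℕ, 1 ≤ j → j ≤ p - 1 → 1 ≤ k → k ≤ p - 1 →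
      s ^ (2 * p - j - k) ≤ ∫ ω, W ω ^ (2 * p - j - k))
    (hint : Integrable (fun ω => ((W ω + t) ^ p - W ω ^ p) ^ 2))
    (hintpow : ∀ m : ℕ, m ≤ 2 * p → Integrable (fun ω => W ω ^ m)) :
    ((s + t) ^ p - s ^ p) ^ 2 / 2 ≤ ∫ ω, ((W ω + t) ^ p - W ω ^ p) ^ 2 :=
  moment_lower_bound_general p hp W hW s t ht hmom hintpow
end

section
/- Let X be a random vector in ℝ^d, θ ∈ ℝ^d, p ≥ 1 an integer, ε ≥ 0, and ‖·‖_* the dual norm of ‖·‖. Then E[sup_{‖Δ‖≤ε} (⟨θ, X+Δ⟩^p - ⟨θ,X⟩^p)²] = E[((|⟨θ,X⟩| + ‖θ‖_* ε)^p - |⟨θ,X⟩|^p)²]. -/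
open MeasureTheory

/-- One-dimensional key inequality. -/
lemma aux_abs_pow_sub_pow_le (z a x : ℝ) (hx : |x - z| ≤ a) (p : ℕ) :
    |x ^ p - z ^ p| ≤ (|z| + a) ^ p - |z| ^ p := by
  have ha : 0 ≤ a := le_trans (abs_nonneg _) hx
  have hxa : |x| ≤ |z| + a := by
    calc |x| = |x - z + z| := by ring_nf
    _ ≤ |x - z| + |z| := abs_add_le _ _
    _ ≤ |z| + a := by linarith
  have hid : (∑ i ∈ Finset.range p, (|z| + a) ^ i * |z| ^ (p - 1 - i)) * ((|z| + a) - |z|)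
      = (|z| + a) ^ p - |z| ^ p := geom_sum₂_mul _ _ p
  have hid2 : (∑ i ∈ Finset.range p, x ^ i * z ^ (p - 1 - i)) * (x - z) = x ^ p - z ^ p :=
    geom_sum₂_mul _ _ p
  rw [← hid2, ← hid]
  have hsum : |∑ i ∈ Finset.range p, x ^ i * z ^ (p - 1 - i)|
      ≤ ∑ i ∈ Finset.range p, (|z| + a) ^ i * |z| ^ (p - 1 - i) := by
    refine le_trans (Finset.abs_sum_le_sum_abs _ _) (Finset.sum_le_sum fun i _ => ?_)
    rw [abs_mul, abs_pow, abs_pow]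
    exact mul_le_mul_of_nonneg_right (pow_le_pow_left₀ (abs_nonneg _) hxa i)
      (pow_nonneg (abs_nonneg _) _)
  calc |(∑ i ∈ Finset.range p, x ^ i * z ^ (p - 1 - i)) * (x - z)|
      = |∑ i ∈ Finset.range p, x ^ i * z ^ (p - 1 - i)| * |x - z| := abs_mul _ _
    _ ≤ (∑ i ∈ Finset.range p, (|z| + a) ^ i * |z| ^ (p - 1 - i)) * a := by
        refine mul_le_mul hsum hx (abs_nonneg _) ?_
        exact le_trans (abs_nonneg _) hsum
    _ = (∑ i ∈ Finset.range p, (|z| + a) ^ i * |z| ^ (p - 1 - i)) * ((|z| + a) - |z|) := by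
        ring_nf

/-- Norm attainment for functionals on finite-dimensional spaces. -/
lemma aux_attain {E : Type*} [NormedAddCommGroup E] [NormedSpace ℝ E] [FiniteDimensional ℝ E]
    (θ : E →L[ℝ] ℝ) (ε : ℝ) (hε : 0 ≤ ε) : ∃ Δ : E, ‖Δ‖ ≤ ε ∧ θ Δ = ‖θ‖ * ε := by
  rcases eq_or_lt_of_le hε with rfl | hε'
  · exact ⟨0, by simp⟩
  obtain ⟨Δ₀, hΔ₀mem, hmax'⟩ := (isCompact_closedBall (0 : E) ε).exists_isMaxOn
    ⟨0, Metric.mem_closedBall_self hε⟩ θ.continuous.continuousOn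
  have hmax : ∀ x ∈ Metric.closedBall (0 : E) ε, θ x ≤ θ Δ₀ := fun x hx => hmax' hx
  have hΔ₀ : ‖Δ₀‖ ≤ ε := by simpa [Metric.mem_closedBall, dist_eq_norm] using hΔ₀mem
  refine ⟨Δ₀, hΔ₀, le_antisymm ?_ ?_⟩
  · calc θ Δ₀ ≤ |θ Δ₀| := le_abs_self _
      _ ≤ ‖θ‖ * ‖Δ₀‖ := θ.le_opNorm _
      _ ≤ ‖θ‖ * ε := mul_le_mul_of_nonneg_left hΔ₀ (norm_nonneg _)
  · have hm0 : 0 ≤ θ Δ₀ := by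
      have := hmax 0 (Metric.mem_closedBall_self hε)
      simpa using this
    have hθle : ‖θ‖ ≤ θ Δ₀ / ε := by
      refine θ.opNorm_le_bound (div_nonneg hm0 hε) fun x => ?_
      rcases eq_or_ne x 0 with rfl | hx
      · simp
      · have hxn : 0 < ‖x‖ := norm_pos_iff.mpr hx
        have hmem : ∀ (s : ℝ), |s| = 1 → (s * (ε / ‖x‖)) • x ∈ Metric.closedBall (0 : E) ε := by
          intro s hs
          simp only [Metric.mem_closedBall, dist_zero_right, norm_smul, Real.norm_eq_abs,
            abs_mul, hs, one_mul, abs_div, abs_of_pos hε', abs_of_pos hxn]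
          rw [div_mul_cancel₀ _ (ne_of_gt hxn)]
        have h1 := hmax _ (hmem 1 (by norm_num))
        have h2 := hmax _ (hmem (-1) (by norm_num))
        simp only [_root_.map_smul, smul_eq_mul, one_mul, neg_one_mul, neg_mul] at h1 h2
        have habs : (ε / ‖x‖) * |θ x| ≤ θ Δ₀ := by
          rcases abs_cases (θ x) with ⟨h, _⟩ | ⟨h, _⟩
          · rw [h]; exact h1
          · rw [h]; simpa [mul_neg] using h2
        rw [Real.norm_eq_abs]
        rw [div_mul_eq_mul_div, le_div_iff₀ hε']
        calc |θ x| * ε = ((ε / ‖x‖) * |θ x|) * ‖x‖ := by field_simp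
          _ ≤ θ Δ₀ * ‖x‖ := mul_le_mul_of_nonneg_right habs (le_of_lt hxn)
    calc ‖θ‖ * ε ≤ (θ Δ₀ / ε) * ε := mul_le_mul_of_nonneg_right hθle hε
      _ = θ Δ₀ := div_mul_cancel₀ _ (ne_of_gt hε')

/-- Pointwise computation of the supremum. -/
lemma aux_pointwise {E : Type*} [NormedAddCommGroup E] [NormedSpace ℝ E] [FiniteDimensional ℝ E]
    (θ : E →L[ℝ] ℝ) (v : E) (p : ℕ) (ε : ℝ) (hε : 0 ≤ ε) :
    ⨆ Δ : {Δ : E // ‖Δ‖ ≤ ε}, (θ (v + ↑Δ) ^ p - θ v ^ p) ^ 2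
      = ((|θ v| + ‖θ‖ * ε) ^ p - |θ v| ^ p) ^ 2 := by
  haveI : Nonempty {Δ : E // ‖Δ‖ ≤ ε} := ⟨⟨0, by simpa using hε⟩⟩
  set z := θ v with hz
  set a := ‖θ‖ * ε with ha
  have ha0 : 0 ≤ a := mul_nonneg (norm_nonneg _) hε
  have hb0 : 0 ≤ (|z| + a) ^ p - |z| ^ p := by
    have := aux_abs_pow_sub_pow_le z a z (by simpa using ha0) p
    exact le_trans (abs_nonneg _) this
  have hub : ∀ Δ : {Δ : E // ‖Δ‖ ≤ ε},
      (θ (v + ↑Δ) ^ p - θ v ^ p) ^ 2 ≤ ((|z| + a) ^ p - |z| ^ p) ^ 2 := by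
    intro Δ
    have hxz : |θ (v + ↑Δ) - z| ≤ a := by
      rw [map_add, hz, add_sub_cancel_left]
      calc |θ (↑Δ : E)| ≤ ‖θ‖ * ‖(↑Δ : E)‖ := θ.le_opNorm _
        _ ≤ ‖θ‖ * ε := mul_le_mul_of_nonneg_left Δ.2 (norm_nonneg _)
    have h1 := aux_abs_pow_sub_pow_le z a (θ (v + ↑Δ)) hxz p
    calc (θ (v + ↑Δ) ^ p - θ v ^ p) ^ 2 = |θ (v + ↑Δ) ^ p - z ^ p| ^ 2 := by
          rw [sq_abs, hz]
      _ ≤ ((|z| + a) ^ p - |z| ^ p) ^ 2 := pow_le_pow_left₀ (abs_nonneg _) h1 2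
  have hbdd : BddAbove (Set.range fun Δ : {Δ : E // ‖Δ‖ ≤ ε} =>
      (θ (v + ↑Δ) ^ p - θ v ^ p) ^ 2) := ⟨((|z| + a) ^ p - |z| ^ p) ^ 2, by
    rintro _ ⟨Δ, rfl⟩; exact hub Δ⟩
  refine le_antisymm (ciSup_le hub) ?_
  obtain ⟨Δ₀, hΔ₀n, hΔ₀v⟩ := aux_attain θ ε hε
  rcases le_or_gt 0 z with hzs | hzs
  · have heq : (θ (v + Δ₀) ^ p - θ v ^ p) ^ 2 = ((|z| + a) ^ p - |z| ^ p) ^ 2 := by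
      rw [map_add, ← hz, hΔ₀v, ← ha, abs_of_nonneg hzs]
    exact heq ▸ le_ciSup hbdd (⟨Δ₀, hΔ₀n⟩ : {Δ : E // ‖Δ‖ ≤ ε})
  · have hn : ‖-Δ₀‖ ≤ ε := by simpa using hΔ₀n
    have heq : (θ (v + -Δ₀) ^ p - θ v ^ p) ^ 2 = ((|z| + a) ^ p - |z| ^ p) ^ 2 := by
      rw [map_add, map_neg, ← hz, hΔ₀v, ← ha, abs_of_neg hzs]
      have h1 : -z + a = -(z + -a) := by ring
      have h2 : (-z : ℝ) = -(z) := rfl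
      rw [h1, h2, neg_pow, neg_pow z]
      have h3 : ((-1 : ℝ) ^ p) ^ 2 = 1 := by
        rw [← pow_mul, mul_comm, pow_mul]; norm_num
      nlinarith [h3, sq_nonneg ((z + -a) ^ p - z ^ p)]
    exact heq ▸ le_ciSup hbdd (⟨-Δ₀, hn⟩ : {Δ : E // ‖Δ‖ ≤ ε})

/-- The mean local smoothness factor of a polynomial ridge function: the supremum inside
the expectation is computed pointwise via the dual norm (here the operator norm of the
linear functional `θ`). -/
theorem mean_local_smoothness_ridge {Ω : Type*} [MeasureSpace Ω]
    [IsProbabilityMeasure (volume : Measure Ω)]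
    {E : Type*} [NormedAddCommGroup E] [NormedSpace ℝ E] [FiniteDimensional ℝ E]
    (θ : E →L[ℝ] ℝ) (X : Ω → E) (p : ℕ) (hp : 1 ≤ p) (ε : ℝ) (hε : 0 ≤ ε)
    (hint : Integrable (fun ω => ((|θ (X ω)| + ‖θ‖ * ε) ^ p - |θ (X ω)| ^ p) ^ 2)) :
    ∫ ω, ⨆ Δ : {Δ : E // ‖Δ‖ ≤ ε}, (θ (X ω + ↑Δ) ^ p - θ (X ω) ^ p) ^ 2
      = ∫ ω, ((|θ (X ω)| + ‖θ‖ * ε) ^ p - |θ (X ω)| ^ p) ^ 2 := by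
  exact integral_congr_ae (Filter.Eventually.of_forall fun ω =>
    aux_pointwise θ (X ω) p ε hε)
end
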